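/- arXiv:0907.1477 — 3 statements merged into one kernel-verified Lean document; each statement's English description precedes it below -/
import Mathlib

section
/- With the notation of the previous statement, writing α_n = binom(b/m, n)(1/(a+mn) + 1/(mn - S)): one has α_0 + α_1 = (S-a)(m² + aS)(S - a - m) / (a m S (a+m)(S-m)), and this quantity is negative when S/2 < m < S and 1 ≤ b = S - a < S/2. -/
/-- Generalized binomial coefficient `binom(x, n)` for real `x`. -/
noncomputable def genBinomR (x : ℝ) (n : ℕ) : ℝ :=
    (∏ k ∈ Finset.range n, (x - k)) / (n.factorial : ℝ)

@[simp]
lemma genBinomR_zero (x : ℝ) : genBinomR x 0 = 1 := by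
  simp [genBinomR]

@[simp]
lemma genBinomR_one (x : ℝ) : genBinomR x 1 = x := by
  simp [genBinomR]

lemma one_div_add_one_div_neg_add_div_mul_eq {a m S : ℝ} (ha : a ≠ 0) (hm : m ≠ 0) (hS : S ≠ 0)
    (ham : a + m ≠ 0) (hSm : S - m ≠ 0) :
    1 / a + 1 / -S + (S - a) / m * (1 / (a + m) + 1 / (m - S)) =
      (S - a) * (m ^ 2 + a * S) * (S - a - m) / (a * m * S * (a + m) * (S - m)) := by
  have hmS : m - S ≠ 0 := by rwa [← neg_sub, neg_ne_zero]
  field_simp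
  ring

lemma sub_mul_sq_add_mul_mul_sub_div_neg {a m S : ℝ} (ha : 0 < a) (hm : 0 < m) (hb : 0 < S - a) (hbm : S - a < m)
    (hmS : m < S) :
    (S - a) * (m ^ 2 + a * S) * (S - a - m) / (a * m * S * (a + m) * (S - m)) < 0 := by
  have hS : 0 < S := by linarith
  apply div_neg_of_neg_of_pos
  · exact mul_neg_of_pos_of_neg (by positivity) (by linarith)
  · have : 0 < S - m := by linarith
    positivity

theorem stmt9_general (m S b a : ℕ) (hlarge : S < 2 * m) (hmS : m < S)
    (hb1 : 1 ≤ b) (hb2 : 2 * b < S) (ha : a + b = S) :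
    let α : ℕ → ℝ := fun n =>
      genBinomR ((b : ℝ) / m) n * (1 / ((a : ℝ) + m * n) + 1 / ((m : ℝ) * n - S))
    α 0 + α 1 =
        ((S : ℝ) - a) * ((m : ℝ) ^ 2 + a * S) * ((S : ℝ) - a - m) /
          ((a : ℝ) * m * S * ((a : ℝ) + m) * ((S : ℝ) - m)) ∧
      α 0 + α 1 < 0 := by
  intro α
  have ha0 : (0 : ℝ) < a := by exact_mod_cast (show 0 < a by omega)
  have hm0 : (0 : ℝ) < m := by exact_mod_cast (show 0 < m by omega)
  have hb : (b : ℝ) = S - a := by rw [← ha]; push_cast; ring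
  have hb0 : (0 : ℝ) < S - a := by rw [← hb]; exact_mod_cast hb1
  have hbm : (S : ℝ) - a < m := by rw [← hb]; exact_mod_cast (show b < m by omega)
  have hmS' : (m : ℝ) < S := by exact_mod_cast hmS
  have hsum : α 0 + α 1 =
      ((S : ℝ) - a) * ((m : ℝ) ^ 2 + a * S) * ((S : ℝ) - a - m) /
        ((a : ℝ) * m * S * ((a : ℝ) + m) * ((S : ℝ) - m)) := by
    simp only [α, hb, genBinomR_zero, genBinomR_one, Nat.cast_zero, Nat.cast_one, mul_zero,
      mul_one, add_zero, zero_sub, one_mul]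
    exact one_div_add_one_div_neg_add_div_mul_eq ha0.ne' hm0.ne' (by linarith) (by linarith)
      (by linarith)
  exact ⟨hsum, hsum ▸ sub_mul_sq_add_mul_mul_sub_div_neg ha0 hm0 hb0 hbm hmS'⟩

/-- With `α_n = binom(b/m,n)(1/(a+mn) + 1/(mn-S))` and `a = S - b`, one has
`α₀ + α₁ = (S-a)(m²+aS)(S-a-m)/(a m S (a+m)(S-m))`, a negative quantity when
`S/2 < m < S` and `1 ≤ b = S - a < S/2`. -/
theorem stmt9 (m S b a : ℕ) (hS : 5 ≤ S) (hlarge : S < 2 * m) (hmS : m < S)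
    (hb1 : 1 ≤ b) (hb2 : 2 * b < S) (ha : a + b = S) :
    let α : ℕ → ℝ := fun n =>
      genBinomR ((b : ℝ) / m) n * (1 / ((a : ℝ) + m * n) + 1 / ((m : ℝ) * n - S))
    α 0 + α 1 =
        ((S : ℝ) - a) * ((m : ℝ) ^ 2 + a * S) * ((S : ℝ) - a - m) /
          ((a : ℝ) * m * S * ((a : ℝ) + m) * ((S : ℝ) - m)) ∧
      α 0 + α 1 < 0 :=
  stmt9_general m S b a hlarge hmS hb1 hb2 ha
end

section
/- For integers m, S, b with S ≥ 5, S/2 < m < S, 1 ≤ b < S/2, and for every n ≥ 1, one has α_{2n} + α_{2n+1} < 0, where α_k = binom(b/m, k)(1/(a+mk) + 1/(mk - S)) and a = S - b. -/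
lemma genBinomR_succ (x : ℝ) (n : ℕ) :
    genBinomR x (n + 1) = genBinomR x n * ((x - n) / (n + 1)) := by
  unfold genBinomR
  rw [Finset.prod_range_succ, Nat.factorial_succ]
  rw [div_mul_div_comm]
  push_cast
  rw [mul_comm ((n:ℝ) + 1) (n.factorial:ℝ)]

lemma genBinomR_signs (x : ℝ) (hx0 : 0 < x) (hx1 : x < 1) :
    ∀ n, 1 ≤ n → genBinomR x (2 * n) < 0 ∧ 0 < genBinomR x (2 * n + 1) := by
  intro n hn
  induction n with
  | zero => omega
  | succ k ih =>
    rcases Nat.lt_or_ge k 1 with hk | hk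
    · interval_cases k
      have h0 : genBinomR x 0 = 1 := by simp [genBinomR]
      have h1 : genBinomR x 1 = x := by
        have := genBinomR_succ x 0
        simpa [h0] using this
      have h2 : genBinomR x 2 = x * ((x - 1) / 2) := by
        have := genBinomR_succ x 1
        norm_num [h1] at this
        simpa using this
      have h2neg : genBinomR x 2 < 0 := by
        rw [h2]
        apply mul_neg_of_pos_of_neg hx0
        apply div_neg_of_neg_of_pos <;> linarith
      constructor
      · simpa using h2neg
      · have h3 : genBinomR x 3 = genBinomR x 2 * ((x - 2) / 3) := by
          have := genBinomR_succ x 2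
          norm_num at this
          simpa using this
        have : genBinomR x 3 > 0 := by
          rw [h3]
          apply mul_pos_of_neg_of_neg h2neg
          apply div_neg_of_neg_of_pos <;> linarith
        simpa using this
    · obtain ⟨ihe, iho⟩ := ih hk
      have hcast : (1 : ℝ) ≤ (2 * k + 1 : ℕ) := by
        push_cast; nlinarith [(by exact_mod_cast hk : (1:ℝ) ≤ (k:ℝ))]
      have e1 : genBinomR x (2 * (k + 1)) =
          genBinomR x (2 * k + 1) * ((x - (2 * k + 1 : ℕ)) / ((2 * k + 1 : ℕ) + 1)) := by
        rw [show 2 * (k + 1) = (2 * k + 1) + 1 by ring]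
        exact genBinomR_succ x (2 * k + 1)
      have hneg1 : genBinomR x (2 * (k + 1)) < 0 := by
        rw [e1]
        apply mul_neg_of_pos_of_neg iho
        apply div_neg_of_neg_of_pos
        · linarith
        · positivity
      refine ⟨hneg1, ?_⟩
      have e2 : genBinomR x (2 * (k + 1) + 1) =
          genBinomR x (2 * (k + 1)) * ((x - (2 * (k + 1) : ℕ)) / ((2 * (k + 1) : ℕ) + 1)) :=
        genBinomR_succ x (2 * (k + 1))
      rw [e2]
      apply mul_pos_of_neg_of_neg hneg1
      apply div_neg_of_neg_of_pos
      · have : (1 : ℝ) ≤ (2 * (k + 1) : ℕ) := by push_cast; linarith [(by exact_mod_cast hk : (1:ℝ) ≤ (k:ℝ))]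
        linarith
      · positivity

/-- With `α_k = binom(b/m,k)(1/(a+mk) + 1/(mk-S))` and `a = S - b`, for every `n ≥ 1`
one has `α_{2n} + α_{2n+1} < 0`. -/
theorem stmt10 (m S b a : ℕ) (hS : 5 ≤ S) (hlarge : S < 2 * m) (hmS : m < S)
    (hb1 : 1 ≤ b) (hb2 : 2 * b < S) (ha : a + b = S) :
    let α : ℕ → ℝ := fun k =>
      genBinomR ((b : ℝ) / m) k * (1 / ((a : ℝ) + m * k) + 1 / ((m : ℝ) * k - S))
    ∀ n : ℕ, 1 ≤ n → α (2 * n) + α (2 * n + 1) < 0 := by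
  intro α n hn
  have hm : 0 < m := by omega
  set x : ℝ := (b : ℝ) / m with hx
  have hx0 : 0 < x := div_pos (by exact_mod_cast hb1) (by exact_mod_cast hm)
  have hx1 : x < 1 := by
    rw [hx, div_lt_one (by exact_mod_cast hm)]
    exact_mod_cast (by omega : b < m)
  obtain ⟨hB2, hB3⟩ := genBinomR_signs x hx0 hx1 n hn
  -- numeric facts
  have hmul : (S : ℕ) + 1 ≤ m * (2 * n) := by
    have h1 : m * 2 ≤ m * (2 * n) := Nat.mul_le_mul_left m (by omega)
    omega
  have hC2 : (0 : ℝ) < (m : ℝ) * (2 * n : ℕ) - S := by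
    have : (S : ℝ) + 1 ≤ (m : ℝ) * (2 * n : ℕ) := by exact_mod_cast hmul
    linarith
  have hC3 : (0 : ℝ) < (m : ℝ) * (2 * n + 1 : ℕ) - S := by
    have h : (m : ℝ) * (2 * n : ℕ) ≤ (m : ℝ) * (2 * n + 1 : ℕ) := by
      apply mul_le_mul_of_nonneg_left _ (by positivity)
      exact_mod_cast (by omega : 2 * n ≤ 2 * n + 1)
    linarith
  have ha1 : 1 ≤ a := by omega
  have hA2 : (0 : ℝ) < (a : ℝ) + m * (2 * n : ℕ) := by
    have : (1 : ℝ) ≤ (a : ℝ) := by exact_mod_cast ha1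
    have : (0 : ℝ) ≤ (m : ℝ) * (2 * n : ℕ) := by positivity
    linarith
  have hA3 : (0 : ℝ) < (a : ℝ) + m * (2 * n + 1 : ℕ) := by
    have : (1 : ℝ) ≤ (a : ℝ) := by exact_mod_cast ha1
    have : (0 : ℝ) ≤ (m : ℝ) * (2 * n + 1 : ℕ) := by positivity
    linarith
  have hA23 : (a : ℝ) + m * (2 * n : ℕ) ≤ (a : ℝ) + m * (2 * n + 1 : ℕ) := by
    have h : (m : ℝ) * (2 * n : ℕ) ≤ (m : ℝ) * (2 * n + 1 : ℕ) := by
      apply mul_le_mul_of_nonneg_left _ (by positivity)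
      exact_mod_cast (by omega : 2 * n ≤ 2 * n + 1)
    linarith
  have hC23 : (m : ℝ) * (2 * n : ℕ) - S ≤ (m : ℝ) * (2 * n + 1 : ℕ) - S := by
    have h : (m : ℝ) * (2 * n : ℕ) ≤ (m : ℝ) * (2 * n + 1 : ℕ) := by
      apply mul_le_mul_of_nonneg_left _ (by positivity)
      exact_mod_cast (by omega : 2 * n ≤ 2 * n + 1)
    linarith
  set f2 : ℝ := 1 / ((a : ℝ) + m * (2 * n : ℕ)) + 1 / ((m : ℝ) * (2 * n : ℕ) - S) with hf2
  set f3 : ℝ := 1 / ((a : ℝ) + m * (2 * n + 1 : ℕ)) + 1 / ((m : ℝ) * (2 * n + 1 : ℕ) - S) with hf3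
  have hf3pos : 0 < f3 := by rw [hf3]; positivity
  have hf32 : f3 ≤ f2 := by
    rw [hf2, hf3]
    gcongr
  -- binom relation
  have erel : genBinomR x (2 * n + 1) =
      genBinomR x (2 * n) * ((x - (2 * n : ℕ)) / ((2 * n : ℕ) + 1)) :=
    genBinomR_succ x (2 * n)
  set r : ℝ := (x - (2 * n : ℕ)) / ((2 * n : ℕ) + 1) with hr
  have hrgt : -1 < r := by
    rw [hr, lt_div_iff₀ (by positivity : (0:ℝ) < ((2 * n : ℕ) : ℝ) + 1)]
    have : (0:ℝ) ≤ ((2 * n : ℕ) : ℝ) := by positivity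
    nlinarith
  have hbr : 0 < f2 + r * f3 := by
    nlinarith [mul_pos (by linarith : (0:ℝ) < 1 + r) hf3pos]
  have final : genBinomR x (2 * n) * f2 + genBinomR x (2 * n + 1) * f3 < 0 := by
    rw [erel]
    calc genBinomR x (2 * n) * f2 + genBinomR x (2 * n) * r * f3
        = genBinomR x (2 * n) * (f2 + r * f3) := by ring
      _ < 0 := mul_neg_of_neg_of_pos hB2 hbr
  simp only [α]
  rw [← hx, ← hf2, ← hf3]
  exact final
end

section
/- Let I be the restriction of I_{m,S,b} to the sector S_m ∩ H (where H is the upper half-plane). Then lim_{z → ζ_m, z ∈ S_m} I(z) = I_1 where ζ_m = e^{iπ/m} and I_1 = (1/m)·B(a/m, d/m)·e^{-iaπ/m}, with B the Euler Beta function, a = S - b, d = m + b. -/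
/-!
The substitution `x = t^{-m}` turns `B(a/m, d/m)` into `m ∫_1^∞ (t^m - 1)^{b/m} t^{-S-1} dt`.
At `ζ = e^{iπ/m}` the base `1 + (tζ)^m = 1 - t^m` of the integrand is a negative real, so on
the principal branch the integrand is `e^{iπb/m} (t^m - 1)^{b/m} / t^{S+1}`, and
`ζ^{-S} e^{iπb/m} = e^{-iπa/m}` gives `I(ζ) = I₁`. Near `ζ` inside `S_m` we have
`0 < arg z < π/m`, so `z^m`, and with it `1 + (tz)^m`, stays in the upper half-plane, where the
principal power extends continuously to the negative axis. Dominated convergence, with the bound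
`C t^{b-S-1}` (integrable as `b < S`), then shows that `I` restricted to the sector is continuous
at `ζ`.
-/

open Complex MeasureTheory Filter

/-- The Abelian integral `I_{m,S,b}(z) = (1/z^S) ∫_1^∞ (1+(tz)^m)^{b/m} dt/t^{S+1}`,
i.e. `∫_{[z,z∞)} (1+u^m)^{b/m} du/u^{S+1}` (principal branch). -/
noncomputable def abelI (m S b : ℕ) (z : ℂ) : ℂ :=
    z ^ (-(S : ℤ)) *
      ∫ t in Set.Ioi (1 : ℝ), (1 + ((t : ℂ) * z) ^ m) ^ ((b : ℂ) / m) / (t : ℂ) ^ (S + 1)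

def sectorSm (m : ℕ) : Set ℂ :=
    {z : ℂ | z ≠ 0 ∧ -(Real.pi / m) < z.arg ∧ z.arg < Real.pi / m}

open Set Real Topology

theorem integral_Ioo_zero_one_eq_integral_Ioi_one_comp_rpow_neg {E : Type*}
    [NormedAddCommGroup E] [NormedSpace ℝ E] (g : ℝ → E) {r : ℝ} (hr : 0 < r) :
    ∫ x in Ioo 0 1, g x = ∫ t in Ioi 1, (r * t ^ (-r - 1)) • g (t ^ (-r)) := by
  have himage : (fun t : ℝ => t ^ (-r)) '' Ioi 1 = Ioo 0 1 := by
    ext x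
    constructor
    · rintro ⟨t, ht, rfl⟩
      exact ⟨rpow_pos_of_pos (zero_lt_one.trans ht) _,
        rpow_lt_one_of_one_lt_of_neg ht (by linarith)⟩
    · rintro ⟨hx0, hx1⟩
      refine ⟨x ^ (-r⁻¹), one_lt_rpow_of_pos_of_lt_one_of_neg hx0 hx1 (by simpa using hr), ?_⟩
      dsimp only
      rw [← rpow_mul hx0.le, neg_mul_neg, inv_mul_cancel₀ hr.ne', rpow_one]
  have hderiv : ∀ t ∈ Ioi (1 : ℝ),
      HasDerivWithinAt (fun t : ℝ => t ^ (-r)) (-r * t ^ (-r - 1)) (Ioi 1) t := fun t ht =>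
    (hasDerivAt_rpow_const (Or.inl (zero_lt_one.trans ht).ne')).hasDerivWithinAt
  have hinj : InjOn (fun t : ℝ => t ^ (-r)) (Ioi 1) :=
    (rpow_left_injOn (neg_ne_zero.2 hr.ne')).mono fun t (ht : 1 < t) => zero_le_one.trans ht.le
  rw [← himage, integral_image_eq_integral_abs_deriv_smul measurableSet_Ioi hderiv hinj]
  refine setIntegral_congr_fun measurableSet_Ioi fun t ht => ?_
  rw [abs_mul, abs_neg, abs_of_pos hr, abs_of_pos (rpow_pos_of_pos (zero_lt_one.trans ht) _)]


theorem integral_Ioo_rpow_mul_one_sub_rpow_eq_integral_Ioi {r : ℝ} (hr : 0 < r) (u v : ℝ) :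
    ∫ x in Ioo 0 1, x ^ (u - 1) * (1 - x) ^ (v - 1) =
      r * ∫ t in Ioi 1, (t ^ r - 1) ^ (v - 1) * t ^ (-(r * (u + v - 1)) - 1) := by
  rw [integral_Ioo_zero_one_eq_integral_Ioi_one_comp_rpow_neg _ hr, ← integral_const_mul]
  refine setIntegral_congr_fun measurableSet_Ioi fun t ht => ?_
  have ht0 : 0 < t := zero_lt_one.trans ht
  have hsub : 1 - t ^ (-r) = (t ^ r - 1) * t ^ (-r) := by
    rw [sub_mul, ← rpow_add ht0, add_neg_cancel, rpow_zero, one_mul]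
  have htr : 0 ≤ t ^ r - 1 := sub_nonneg.2 (one_le_rpow ht.le hr.le)
  rw [smul_eq_mul, hsub, mul_rpow htr (rpow_nonneg ht0.le _), ← rpow_mul ht0.le,
    ← rpow_mul ht0.le]
  have hexp : -(r * (u + v - 1)) - 1 = (-r - 1) + (-r * (u - 1) + -r * (v - 1)) := by ring
  rw [hexp, rpow_add ht0, rpow_add ht0]
  ring

theorem Complex.betaIntegral_ofReal (u v : ℝ) :
    betaIntegral u v = ((∫ x in Ioo (0 : ℝ) 1, x ^ (u - 1) * (1 - x) ^ (v - 1) : ℝ) : ℂ) := by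
  rw [betaIntegral, intervalIntegral.integral_of_le zero_le_one, integral_Ioc_eq_integral_Ioo]
  refine (setIntegral_congr_fun measurableSet_Ioo fun x hx => ?_).trans integral_complex_ofReal
  rw [ofReal_mul, ofReal_cpow hx.1.le, ofReal_cpow (sub_nonneg.2 hx.2.le)]
  push_cast
  rfl

theorem Complex.continuousWithinAt_cpow_const_of_re_neg_of_im_zero {z : ℂ} (hre : z.re < 0)
    (him : z.im = 0) (w : ℂ) : ContinuousWithinAt (· ^ w) {z : ℂ | 0 ≤ z.im} z := by
  have hz : z ≠ 0 := by rintro rfl; simp at hre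
  refine (((continuousWithinAt_log_of_re_neg_of_im_zero hre him).mul_const w).cexp
    ).congr_of_eventuallyEq (mem_nhdsWithin_of_mem_nhds (cpow_eq_nhds hz)) ?_
  exact cpow_def_of_ne_zero hz w

theorem Complex.im_pow_pos {z : ℂ} {n : ℕ} (hn : 0 < n) (harg : 0 < arg z)
    (hargπ : n * arg z < π) : 0 < (z ^ n).im := by
  have hz : z ≠ 0 := by rintro rfl; simp at harg
  rw [← norm_mul_exp_arg_mul_I z, mul_pow, ← Complex.exp_nat_mul, ← ofReal_pow,
    show (n : ℂ) * (arg z * I) = ((n * arg z : ℝ) : ℂ) * I by push_cast; ring, im_ofReal_mul,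
    exp_ofReal_mul_I_im]
  exact mul_pos (pow_pos (norm_pos_iff.2 hz) n)
    (sin_pos_of_pos_of_lt_pi (mul_pos (Nat.cast_pos.2 hn) harg) hargπ)

noncomputable def abelIntegrand (m S b : ℕ) (z : ℂ) (t : ℝ) : ℂ :=
  (1 + ((t : ℂ) * z) ^ m) ^ ((b : ℂ) / m) / (t : ℂ) ^ (S + 1)

theorem abelI_eq (m S b : ℕ) (z : ℂ) :
    abelI m S b z = z ^ (-(S : ℤ)) * ∫ t in Ioi 1, abelIntegrand m S b z t := rfl

theorem exp_pi_div_mul_I_pow {m : ℕ} (hm : m ≠ 0) : exp (π / m * I) ^ m = -1 := by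
  rw [← Complex.exp_nat_mul, ← exp_pi_mul_I]
  congr 1
  field_simp

theorem abelIntegrand_eq_of_pow_eq_neg_one {m : ℕ} (S b : ℕ) {ζ : ℂ} (hζ : ζ ^ m = -1)
    {t : ℝ} (ht : 1 ≤ t) :
    abelIntegrand m S b ζ t =
      ((t ^ (m : ℝ) - 1) ^ ((b : ℝ) / m) * t ^ (-(S : ℝ) - 1) : ℝ) *
        exp (π * I * (b / m)) := by
  have hbase : 1 + ((t : ℂ) * ζ) ^ m = ((1 - t ^ (m : ℝ) : ℝ) : ℂ) := by
    rw [mul_pow, hζ, rpow_natCast]; push_cast; ring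
  have htm : 1 ≤ t ^ (m : ℝ) := one_le_rpow ht m.cast_nonneg
  have ht0 : 0 < t := zero_lt_one.trans_le ht
  rw [abelIntegrand, hbase, ofReal_cpow_of_nonpos (by linarith), ← ofReal_neg, neg_sub,
    ofReal_mul, ofReal_cpow (by linarith), rpow_sub ht0, rpow_one, rpow_neg ht0.le]
  push_cast [rpow_natCast]
  ring

theorem abelI_exp_pi_div_mul_I {m S b a d : ℕ} (hm : m ≠ 0) (ha : a + b = S)
    (hd : d = m + b) :
    abelI m S b (exp (π / m * I)) =
      1 / (m : ℂ) * betaIntegral ((a : ℂ) / m) ((d : ℂ) / m) * exp (-((a : ℂ) * π / m) * I) := by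
  have hmR : (0 : ℝ) < m := Nat.cast_pos.2 (Nat.pos_of_ne_zero hm)
  have hzpow : exp (π / m * I) ^ (-(S : ℤ)) * exp (π * I * (b / m)) =
      exp (-((a : ℂ) * π / m) * I) := by
    rw [← Complex.exp_int_mul, ← Complex.exp_add]
    congr 1
    rw [← ha]
    push_cast
    ring
  have hbeta : betaIntegral ((a : ℂ) / m) ((d : ℂ) / m) =
      m * ((∫ t in Ioi 1, (t ^ (m : ℝ) - 1) ^ ((b : ℝ) / m) * t ^ (-(S : ℝ) - 1) : ℝ) : ℂ) := by
    have hv : (d : ℝ) / m - 1 = b / m := by rw [hd]; push_cast; field_simp; ring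
    have hS : (m : ℝ) * ((a : ℝ) / m + d / m - 1) = S := by
      rw [← ha, hd]; push_cast; field_simp; ring
    rw [show ((a : ℂ) / m) = ((a / m : ℝ) : ℂ) by push_cast; rfl,
      show ((d : ℂ) / m) = ((d / m : ℝ) : ℂ) by push_cast; rfl, betaIntegral_ofReal,
      integral_Ioo_rpow_mul_one_sub_rpow_eq_integral_Ioi hmR, hv, hS]
    push_cast
    rfl
  calc abelI m S b (exp (π / m * I))
      = exp (π / m * I) ^ (-(S : ℤ)) * ∫ t in Ioi 1,
          ((t ^ (m : ℝ) - 1) ^ ((b : ℝ) / m) * t ^ (-(S : ℝ) - 1) : ℝ) *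
            exp (π * I * (b / m)) := by
        rw [abelI_eq]
        congr 1
        exact setIntegral_congr_fun measurableSet_Ioi fun t ht =>
          abelIntegrand_eq_of_pow_eq_neg_one S b (exp_pi_div_mul_I_pow hm) (le_of_lt ht)
    _ = _ := by
        rw [integral_mul_const, integral_complex_ofReal, hbeta, ← hzpow]
        field_simp

theorem eventually_im_pow_pos_nhdsWithin_sectorSm {m : ℕ} (hm : 2 ≤ m) :
    ∀ᶠ z in 𝓝[sectorSm m] exp (π / m * I), 0 < (z ^ m).im := by
  have hmR : (2 : ℝ) ≤ m := by exact_mod_cast hm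
  have hθ : 0 < π / m := div_pos pi_pos (by linarith)
  have hθπ : π / m < π := div_lt_self pi_pos (by linarith)
  have hζ : exp (π / m * I) = cos ((π / m : ℝ) : ℂ) + sin ((π / m : ℝ) : ℂ) * I := by
    rw [← exp_mul_I]; push_cast; rfl
  have harg : arg (exp (π / m * I)) = π / m := by
    rw [hζ]; exact arg_cos_add_sin_mul_I ⟨by linarith [pi_pos], hθπ.le⟩
  have hslit : exp (π / m * I) ∈ slitPlane := by
    refine Or.inr (ne_of_gt ?_)
    rw [hζ, ← ofReal_cos, ← ofReal_sin, add_im, ofReal_im, im_ofReal_mul, I_im, mul_one,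
      zero_add]
    exact sin_pos_of_pos_of_lt_pi hθ hθπ
  have harg_pos : ∀ᶠ z in 𝓝[sectorSm m] exp (π / m * I), 0 < arg z :=
    ((continuousAt_arg hslit).tendsto.mono_left nhdsWithin_le_nhds).eventually
      (eventually_gt_nhds (harg ▸ hθ))
  filter_upwards [harg_pos, self_mem_nhdsWithin] with z hz hzS
  exact im_pow_pos (by omega) hz ((lt_div_iff₀' (by positivity)).1 hzS.2.2)

theorem tendsto_abelIntegrand {m : ℕ} (S b : ℕ) {ζ : ℂ} (hζ : ζ ^ m = -1) {l : Filter ℂ}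
    (hl : l ≤ 𝓝 ζ) (him : ∀ᶠ z in l, 0 ≤ (z ^ m).im) {t : ℝ} (ht : 1 < t) :
    Tendsto (fun z => abelIntegrand m S b z t) l (𝓝 (abelIntegrand m S b ζ t)) := by
  have hm : m ≠ 0 := by rintro rfl; norm_num at hζ
  have hbase : 1 + ((t : ℂ) * ζ) ^ m = ((1 - t ^ m : ℝ) : ℂ) := by
    rw [mul_pow, hζ]; push_cast; ring
  have hneg : 1 - t ^ m < 0 := sub_neg.2 (one_lt_pow₀ ht hm)
  have hw : Tendsto (fun z : ℂ => 1 + ((t : ℂ) * z) ^ m) l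
      (𝓝[{w | 0 ≤ w.im}] (1 + ((t : ℂ) * ζ) ^ m)) := by
    have hcont : Continuous fun z : ℂ => 1 + ((t : ℂ) * z) ^ m := by fun_prop
    refine tendsto_nhdsWithin_iff.2 ⟨(hcont.tendsto ζ).mono_left hl, ?_⟩
    filter_upwards [him] with z hz
    rw [add_im, one_im, zero_add, mul_pow, ← ofReal_pow, im_ofReal_mul]
    exact mul_nonneg (pow_nonneg (zero_le_one.trans ht.le) m) hz
  have hcpow := continuousWithinAt_cpow_const_of_re_neg_of_im_zero
    (z := 1 + ((t : ℂ) * ζ) ^ m) (by rw [hbase, ofReal_re]; exact hneg)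
    (by rw [hbase, ofReal_im]) ((b : ℂ) / m)
  exact (hcpow.tendsto.comp hw).div_const _

theorem norm_abelIntegrand_le {m : ℕ} (hm : m ≠ 0) (S b : ℕ) {z : ℂ} {R : ℝ}
    (hz : ‖z‖ ≤ R) {t : ℝ} (ht : 1 ≤ t) :
    ‖abelIntegrand m S b z t‖ ≤ (1 + R ^ m) ^ ((b : ℝ) / m) * t ^ ((b : ℝ) - (S + 1)) := by
  have ht0 : 0 < t := zero_lt_one.trans_le ht
  have hR : 0 ≤ R := (norm_nonneg z).trans hz
  have hbase : ‖1 + ((t : ℂ) * z) ^ m‖ ≤ (1 + R ^ m) * t ^ m := by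
    calc ‖1 + ((t : ℂ) * z) ^ m‖ ≤ 1 + (t * ‖z‖) ^ m := by
          simpa [norm_mul, norm_pow, abs_of_pos ht0] using norm_add_le 1 (((t : ℂ) * z) ^ m)
      _ ≤ t ^ m + (t * R) ^ m := by gcongr; exact one_le_pow₀ ht
      _ = (1 + R ^ m) * t ^ m := by ring
  rw [abelIntegrand, norm_div, show (b : ℂ) / m = ((b / m : ℝ) : ℂ) by push_cast; rfl,
    norm_cpow_real, norm_pow, norm_real, norm_of_nonneg ht0.le]
  calc ‖1 + ((t : ℂ) * z) ^ m‖ ^ ((b : ℝ) / m) / t ^ (S + 1)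
      ≤ ((1 + R ^ m) * t ^ m) ^ ((b : ℝ) / m) / t ^ (S + 1) := by gcongr
    _ = (1 + R ^ m) ^ ((b : ℝ) / m) * t ^ ((b : ℝ) - (S + 1)) := by
      rw [mul_rpow (by positivity) (by positivity), ← rpow_natCast t m, ← rpow_mul ht0.le,
        mul_div_cancel₀ _ (Nat.cast_ne_zero.2 hm), rpow_sub ht0, ← Nat.cast_succ, rpow_natCast,
        rpow_natCast, mul_div_assoc]

theorem tendsto_integral_abelIntegrand {m S b : ℕ} (hb : b < S) {ζ : ℂ} (hζ : ζ ^ m = -1)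
    {l : Filter ℂ} [l.IsCountablyGenerated] (hl : l ≤ 𝓝 ζ)
    (him : ∀ᶠ z in l, 0 ≤ (z ^ m).im) :
    Tendsto (fun z => ∫ t in Ioi 1, abelIntegrand m S b z t) l
      (𝓝 (∫ t in Ioi 1, abelIntegrand m S b ζ t)) := by
  have hm : m ≠ 0 := by rintro rfl; norm_num at hζ
  have hnorm : ∀ᶠ z in l, ‖z‖ ≤ ‖ζ‖ + 1 :=
    ((continuous_norm.tendsto ζ).mono_left hl).eventually (eventually_le_nhds (lt_add_one _))
  have hbS : (b : ℝ) - (S + 1) < -1 := by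
    have : (b : ℝ) < S := by exact_mod_cast hb
    linarith
  refine tendsto_integral_filter_of_dominated_convergence
    (fun t => (1 + (‖ζ‖ + 1) ^ m) ^ ((b : ℝ) / m) * t ^ ((b : ℝ) - (S + 1)))
    (Eventually.of_forall fun z => ?_) ?_
    ((integrableOn_Ioi_rpow_of_lt hbS one_pos).const_mul _)
    ((ae_restrict_iff' measurableSet_Ioi).2
      (ae_of_all _ fun t ht => tendsto_abelIntegrand S b hζ hl him ht))
  · have : Measurable (abelIntegrand m S b z) := by unfold abelIntegrand; fun_prop
    exact this.aestronglyMeasurable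
  · filter_upwards [hnorm] with z hz
    exact (ae_restrict_iff' measurableSet_Ioi).2
      (ae_of_all _ fun t ht => norm_abelIntegrand_le hm S b hz (le_of_lt ht))

theorem tendsto_abelI_of_pow_eq_neg_one {m S b : ℕ} (hb : b < S) {ζ : ℂ} (hζ : ζ ^ m = -1)
    {l : Filter ℂ} [l.IsCountablyGenerated] (hl : l ≤ 𝓝 ζ)
    (him : ∀ᶠ z in l, 0 ≤ (z ^ m).im) :
    Tendsto (abelI m S b) l (𝓝 (abelI m S b ζ)) := by
  have hm : m ≠ 0 := by rintro rfl; norm_num at hζ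
  have hζ0 : ζ ≠ 0 := ne_zero_pow hm (by rw [hζ]; norm_num)
  simp only [abelI_eq]
  exact (((continuousAt_zpow₀ ζ _ (Or.inl hζ0)).tendsto).mono_left hl).mul
    (tendsto_integral_abelIntegrand hb hζ hl him)

theorem stmt12_general (m S b a d : ℕ) (hlarge : S < 2 * m) (hmS : m < S)
    (hb2 : 2 * b < S) (ha : a + b = S) (hd : d = m + b) :
    Tendsto (abelI m S b)
      (nhdsWithin (Complex.exp (Real.pi / m * Complex.I)) (sectorSm m))
      (nhds
        ((1 / (m : ℂ)) * Complex.betaIntegral ((a : ℂ) / m) ((d : ℂ) / m) *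
          Complex.exp (-((a : ℂ) * Real.pi / m) * Complex.I))) := by
  have hm : 2 ≤ m := by omega
  rw [← abelI_exp_pi_div_mul_I (by omega) ha hd]
  exact tendsto_abelI_of_pow_eq_neg_one (by omega) (exp_pi_div_mul_I_pow (by omega))
    nhdsWithin_le_nhds ((eventually_im_pow_pos_nhdsWithin_sectorSm hm).mono fun _ h => h.le)

/-- As `z → ζ_m = e^{iπ/m}` within the sector `S_m`, `I_{m,S,b}(z)` tends to
`I₁ = (1/m)·B(a/m, d/m)·e^{-iaπ/m}` with `a = S - b`, `d = m + b` and `B` Euler's Beta. -/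
theorem stmt12 (m S b a d : ℕ) (hS : 5 ≤ S) (hlarge : S < 2 * m) (hmS : m < S)
    (hb1 : 1 ≤ b) (hb2 : 2 * b < S) (ha : a + b = S) (hd : d = m + b) :
    Tendsto (abelI m S b)
      (nhdsWithin (Complex.exp (Real.pi / m * Complex.I)) (sectorSm m))
      (nhds
        ((1 / (m : ℂ)) * Complex.betaIntegral ((a : ℂ) / m) ((d : ℂ) / m) *
          Complex.exp (-((a : ℂ) * Real.pi / m) * Complex.I))) :=
  stmt12_general m S b a d hlarge hmS hb2 ha hd
end
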